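/- For every integer n ≥ 1 and every a = (a₁, a₂) ∈ D_n, one has a ≺ p_n; explicitly, writing p_n = (p₁, p₂) (so p_n = ((n+3)/2, 0) for n odd and p_n = (n/2+1, 0) for n even), either 2a₁ − a₂ < 2p₁ − p₂, or 2a₁ − a₂ = 2p₁ − p₂ and a₁ + a₂ < p₁ + p₂. -/

import Mathlib

open Pointwise

/-- The submonoid `σ_Z ⊂ ℤ²` of pairs `(a,b)` with `0 ≤ b` and `3b ≤ 4a`. -/
def sigmaZ : Set (ℤ × ℤ) := {a : ℤ × ℤ | 0 ≤ a.2 ∧ 3 * a.2 ≤ 4 * a.1}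

/-- The point `p_n`. -/
def pPt (n : ℤ) : ℤ × ℤ := if Odd n then ((n + 3) / 2, 0) else (n / 2 + 1, 0)

/-- The point `s_n`. -/
def sPt (n : ℤ) : ℤ × ℤ :=
  if Odd n then (3 * (n + 1) / 2, 2 * (n + 1)) else (3 * (n + 2) / 2, 2 * (n + 2))

/-- The point `q^i = (n+1-i, n-2i)`. -/
def qPt (n i : ℤ) : ℤ × ℤ := (n + 1 - i, n - 2 * i)

/-- The point `r^j = (n+1+j, n+1+2j)`. -/
def rPt (n j : ℤ) : ℤ × ℤ := (n + 1 + j, n + 1 + 2 * j)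

/-- The set `P_n ⊂ ℤ²`. -/
def Pset (n : ℤ) : Set (ℤ × ℤ) :=
  {pPt n, sPt n}
    ∪ {x | ∃ i : ℤ, 0 ≤ i ∧ i ≤ (if Odd n then (n - 1) / 2 else (n - 2) / 2) ∧ x = qPt n i}
    ∪ {x | ∃ j : ℤ, 0 ≤ j ∧ j ≤ (if Odd n then (n - 1) / 2 else n / 2) ∧ x = rPt n j}

/-- The set `D_n = σ_Z \ (P_n + σ_Z)`, where `+` is pointwise addition of sets. -/
def Dset (n : ℤ) : Set (ℤ × ℤ) := sigmaZ \ (Pset n + sigmaZ)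

/-- The monomial ordering `≺` on `ℤ²` associated to the matrix with rows `(2,-1)` and
`(1,1)` : `β ≺ α` iff `2β₁−β₂ < 2α₁−α₂`, or `2β₁−β₂ = 2α₁−α₂` and `β₁+β₂ < α₁+α₂`. -/
def precLt (b a : ℤ × ℤ) : Prop :=
  2 * b.1 - b.2 < 2 * a.1 - a.2 ∨
    (2 * b.1 - b.2 = 2 * a.1 - a.2 ∧ b.1 + b.2 < a.1 + a.2)


/-!
For `g ∈ P_n` with `g₂ ≤ y`, that `a = (x, y)` is not in `g + σ_Z` means `4(x - g₁) < 3(y - g₂)`.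
Since `2x - y = 2(x - g₁) - (y - g₂) + (2g₁ - g₂)`, this gives `2x - y < 2g₁ - g₂` when
`y - g₂ ≤ 1` and `2x - y ≤ 2g₁ - g₂` when `y - g₂ = 2`. Now `2g₁ - g₂` is `2(p_n)₁` for `p_n`,
`n + 2` for every `q^i` and `n + 1` for every `r^j`, and `n + 2 ≤ 2(p_n)₁`; taking `p_n` for
`y ≤ 1`, then `q^i` and `r^j` with `g₂` just below `y`, reaches every height below `(s_n)₂`.
Above it nothing is left: `s_n = ⌊(n+2)/2⌋ • (3, 4)` lies on the boundary ray of `σ_Z`.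
So already the first key of `≺` gives `a ≺ p_n`.
-/

theorem pPt_eq (n : ℤ) : pPt n = ((n + 3) / 2, 0) := by
  unfold pPt
  split_ifs with h
  · rfl
  · obtain ⟨k, rfl⟩ := Int.not_odd_iff_even.mp h
    congr 1
    omega

theorem sPt_eq (n : ℤ) : sPt n = (3 * ((n + 2) / 2), 4 * ((n + 2) / 2)) := by
  unfold sPt
  split_ifs with h
  · obtain ⟨k, rfl⟩ := h
    congr 1 <;> omega
  · obtain ⟨k, rfl⟩ := Int.not_odd_iff_even.mp h
    congr 1 <;> omega

theorem pPt_mem_Pset (n : ℤ) : pPt n ∈ Pset n :=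
  Or.inl (Or.inl (Or.inl rfl))

theorem sPt_mem_Pset (n : ℤ) : sPt n ∈ Pset n :=
  Or.inl (Or.inl (Or.inr rfl))

theorem qPt_mem_Pset {n i : ℤ} (hi₀ : 0 ≤ i) (hi : 2 * i < n) : qPt n i ∈ Pset n := by
  refine Or.inl (Or.inr ⟨i, hi₀, ?_, rfl⟩)
  split_ifs with h
  · obtain ⟨k, rfl⟩ := h
    omega
  · obtain ⟨k, rfl⟩ := Int.not_odd_iff_even.mp h
    omega

theorem rPt_mem_Pset {n j : ℤ} (hj₀ : 0 ≤ j) (hj : 2 * j ≤ n) : rPt n j ∈ Pset n := by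
  refine Or.inr ⟨j, hj₀, ?_, rfl⟩
  split_ifs with h
  · obtain ⟨k, rfl⟩ := h
    omega
  · omega

theorem four_mul_fst_lt_of_notMem_add_sigmaZ {P : Set (ℤ × ℤ)} {a g : ℤ × ℤ}
    (ha : a ∉ P + sigmaZ) (hg : g ∈ P) (hle : g.2 ≤ a.2) :
    4 * a.1 < 4 * g.1 + 3 * (a.2 - g.2) := by
  by_contra! h
  have hag : a - g ∈ sigmaZ := by
    simp only [sigmaZ, Set.mem_ofPred_eq, Prod.fst_sub, Prod.snd_sub]
    omega
  exact ha ⟨g, hg, a - g, hag, add_sub_cancel g a⟩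

namespace Dset

variable {n : ℤ} {a : ℤ × ℤ}

theorem snd_lt_sPt_snd (ha : a ∈ Dset n) : a.2 < (sPt n).2 := by
  by_contra! hle
  have hs := four_mul_fst_lt_of_notMem_add_sigmaZ ha.2 (sPt_mem_Pset n) hle
  rw [sPt_eq] at hs hle
  have hσ := ha.1.2
  simp only at hs hle
  omega

theorem two_mul_fst_sub_snd_lt_of_snd_le_one (ha : a ∈ Dset n) (hy : a.2 ≤ 1) :
    2 * a.1 - a.2 < 2 * ((n + 3) / 2) := by
  have hp := four_mul_fst_lt_of_notMem_add_sigmaZ ha.2 (pPt_mem_Pset n)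
    (by rw [pPt_eq]; exact ha.1.1)
  rw [pPt_eq] at hp
  simp only at hp
  omega

theorem two_mul_fst_sub_snd_lt_of_qPt {i : ℤ} (ha : a ∈ Dset n) (hi₀ : 0 ≤ i) (hi : 2 * i < n)
    (hy : (qPt n i).2 ≤ a.2) (hy' : a.2 ≤ (qPt n i).2 + 1) :
    2 * a.1 - a.2 < n + 2 := by
  have hq := four_mul_fst_lt_of_notMem_add_sigmaZ ha.2 (qPt_mem_Pset hi₀ hi) hy
  simp only [qPt] at hq hy hy'
  omega

theorem two_mul_fst_sub_snd_lt_of_rPt {j : ℤ} (ha : a ∈ Dset n) (hj₀ : 0 ≤ j) (hj : 2 * j ≤ n)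
    (hy : (rPt n j).2 ≤ a.2) (hy' : a.2 ≤ (rPt n j).2 + 2) :
    2 * a.1 - a.2 < n + 2 := by
  have hr := four_mul_fst_lt_of_notMem_add_sigmaZ ha.2 (rPt_mem_Pset hj₀ hj) hy
  simp only [rPt] at hr hy hy'
  omega

end Dset

theorem Dset_lt_pPt_general (n : ℕ) :
    ∀ a ∈ Dset (n : ℤ), precLt a (pPt (n : ℤ)) := by
  rintro ⟨x, y⟩ ha
  suffices h : 2 * x - y < 2 * ((n + 3 : ℤ) / 2) by
    left
    simpa [pPt_eq] using h
  have hs := Dset.snd_lt_sPt_snd ha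
  rw [sPt_eq] at hs
  simp only at hs
  by_cases hy₁ : y ≤ 1
  · exact Dset.two_mul_fst_sub_snd_lt_of_snd_le_one ha hy₁
  suffices h : 2 * x - y < n + 2 by omega
  by_cases hyq : y ≤ n + 1
  · exact Dset.two_mul_fst_sub_snd_lt_of_qPt ha (i := (n + 1 - y) / 2)
      (by omega) (by omega) (by simp only [qPt]; omega) (by simp only [qPt]; omega)
  · exact Dset.two_mul_fst_sub_snd_lt_of_rPt ha (j := (y - n - 2) / 2)
      (by omega) (by omega) (by simp only [rPt]; omega) (by simp only [rPt]; omega)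

/-- for every integer `n ≥ 1` and every `a ∈ D_n`, one has `a ≺ p_n`. -/
theorem Dset_lt_pPt (n : ℕ) (hn : 1 ≤ n) :
    ∀ a ∈ Dset (n : ℤ), precLt a (pPt (n : ℤ)) :=
  Dset_lt_pPt_general n
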